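/- arXiv:2205.13454 — 3 statements merged into one kernel-verified Lean document; each statement's English description precedes it below -/
import Mathlib

section
/- Define the binary Pascal map M : F₂ⁿ → F₂ⁿ⁻¹ by (M v)_i = v_i + v_{i+1} (addition mod 2). Then iterating: for a string of length n = 2^x + 1 with first entry A and last entry B, the single entry obtained after n−1 applications of M equals A ⊕ B. -/
/-!
Unrolling the Pascal map `k` times gives the `k`-th row of Pascal's triangle mod 2:
`pascalIter k v = ∑ i, (k choose i) v i`. For `k = 2 ^ x` every inner coefficient
`(2 ^ x choose i)`, `0 < i < 2 ^ x`, is even, so only the two endpoints survive.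
-/

/-- One step of the binary Pascal map: `(M v)_i = v_i + v_{i+1}` over `F₂`. -/
def pascalStep {k : ℕ} (v : Fin (k + 1) → ZMod 2) : Fin k → ZMod 2 :=
  fun i => v i.castSucc + v i.succ

/-- Iterating the Pascal map all the way down to a single bit. -/
def pascalIter : (k : ℕ) → (Fin (k + 1) → ZMod 2) → ZMod 2
  | 0, v => v 0
  | k + 1, v => pascalIter k (pascalStep v)

open Finset

lemma sum_choose_mul_castSucc {R : Type*} [Semiring R] (k : ℕ) (v : Fin (k + 2) → R) :
    ∑ i : Fin (k + 1), (k.choose i : R) * v i.castSucc =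
      v 0 + ∑ i : Fin (k + 1), (k.choose (i + 1) : R) * v i.succ := by
  rw [Fin.sum_univ_succ, Fin.sum_univ_castSucc (fun i : Fin (k + 1) => _ * v i.succ)]
  simp [Fin.succ_castSucc, -Fin.castSucc_succ]

lemma pascalIter_eq_sum_choose_mul :
    ∀ (k : ℕ) (v : Fin (k + 1) → ZMod 2),
      pascalIter k v = ∑ i : Fin (k + 1), (k.choose i : ZMod 2) * v i
  | 0, v => by simp [pascalIter]
  | k + 1, v => by
    rw [pascalIter, pascalIter_eq_sum_choose_mul k, Fin.sum_univ_succ (n := k + 1)]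
    simp only [pascalStep, mul_add, sum_add_distrib, sum_choose_mul_castSucc, Fin.val_succ,
      Nat.choose_succ_succ', Nat.cast_add, add_mul, Fin.val_zero, Nat.choose_zero_right,
      Nat.cast_one, one_mul]
    ring

lemma Nat.Prime.cast_choose_pow_eq_zero {p n k : ℕ} (hp : p.Prime) (hk₀ : k ≠ 0)
    (hk : k ≠ p ^ n) : ((p ^ n).choose k : ZMod p) = 0 :=
  (ZMod.natCast_eq_zero_iff _ _).2 (hp.dvd_choose_pow hk₀ hk)

/-- For a binary string of length `n = 2^x + 1`, the single entry obtained after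
`n − 1` applications of the Pascal map equals the XOR of the first and last entries. -/
theorem pascalIter_pow_two_add_one (x : ℕ) (v : Fin (2 ^ x + 1) → ZMod 2) :
    pascalIter (2 ^ x) v = v 0 + v (Fin.last (2 ^ x)) := by
  have first_ne_last : (0 : Fin (2 ^ x + 1)) ≠ Fin.last (2 ^ x) :=
    (Fin.last_pos' (n := 2 ^ x)).ne
  rw [pascalIter_eq_sum_choose_mul, sum_eq_add_of_mem 0 (Fin.last _) (mem_univ _) (mem_univ _)
    first_ne_last]
  · simp
  · rintro i - ⟨hi₀, hi⟩
    rw [Nat.prime_two.cast_choose_pow_eq_zero (Fin.val_ne_iff.2 hi₀) (Fin.val_ne_iff.2 hi),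
      zero_mul]
end

section
/- With T : F₂ⁿ → F₂ⁿ the linear map (T v)_i = v_i + v_{i+1} (indices in lexicographic order, (T v)_{n−1} = v_{n−1}), the orbit under T of the standard basis vector e_{2^{⌊log₂ n⌋}−1} (the string with a single 1 in position 2^{⌊log₂ n⌋}−1, zero-indexed) has period exactly 2^{⌊log₂ n⌋}, and exactly one element of this orbit has a 1 in its first entry. -/
/-!
Writing `T = 1 + S` with `S` the shift `(S v)_i = v_{i+1}`, the vector `T^k e_j` has entry
`C(k, j - i)` at every position `i ≤ j` (Pascal's rule) and `0` beyond `j`. Since `C(2^t, r)` is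
even for `0 < r < 2^t`, `T^{2^t} e_j = e_j` as soon as `j < 2^t`; position `j - q` of `T^q e_j`
carries `C(q, q) = 1`, so no smaller `q ≤ j` is a period; and the first entry `C(k, j)` of `T^k e_j`
vanishes for `k < j`.
-/

/-- The shifted-addition ("CNOT ladder") map on length-`n` binary strings:
`(T v)_i = v_i + v_{i+1}` for `i < n − 1`, and `(T v)_{n−1} = v_{n−1}`. -/
def ladderMap {n : ℕ} (v : Fin n → ZMod 2) : Fin n → ZMod 2 :=
  fun i => if h : (i : ℕ) + 1 < n then v i + v ⟨(i : ℕ) + 1, h⟩ else v i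

def stdBasis (n j : ℕ) : Fin n → ZMod 2 := fun i => if (i : ℕ) = j then 1 else 0

theorem iterate_ladderMap_stdBasis_apply {n j : ℕ} (hj : j < n) (k : ℕ) (i : Fin n) :
    ladderMap^[k] (stdBasis n j) i =
      if (i : ℕ) ≤ j then ((k.choose (j - i) : ℕ) : ZMod 2) else 0 := by
  induction k generalizing i with
  | zero =>
    rcases lt_trichotomy (i : ℕ) j with h | h | h
    · simp [stdBasis, h.ne, h.le, Nat.choose_eq_zero_of_lt (Nat.sub_pos_of_lt h)]
    · simp [stdBasis, h]
    · simp [stdBasis, h.ne', h.not_ge]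
  | succ k ih =>
    rw [Function.iterate_succ_apply']
    simp only [ladderMap, ih]
    split_ifs with hlt hi hi₁ _ hi₁
    · rw [show j - i = j - (i + 1) + 1 by omega, Nat.choose_succ_succ']
      push_cast
      ring
    · simp [show j - i = 0 by omega]
    · omega
    · simp
    · simp [show j - i = 0 by omega]
    · rfl

theorem natCast_choose_two_pow_eq_zero {t r : ℕ} (hr₀ : r ≠ 0) (hrt : r < 2 ^ t) :
    (((2 ^ t).choose r : ℕ) : ZMod 2) = 0 :=
  (ZMod.natCast_eq_zero_iff _ _).mpr (Nat.prime_two.dvd_choose_pow hr₀ hrt.ne)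

theorem iterate_ladderMap_two_pow_stdBasis {n j t : ℕ} (hj : j < n) (hjt : j < 2 ^ t) :
    ladderMap^[2 ^ t] (stdBasis n j) = stdBasis n j := by
  funext i
  rw [iterate_ladderMap_stdBasis_apply hj]
  rcases lt_trichotomy (i : ℕ) j with h | h | h
  · have h_even := natCast_choose_two_pow_eq_zero (t := t) (by omega : j - i ≠ 0) (by omega)
    simp [stdBasis, h.le, h.ne, h_even]
  · simp [stdBasis, h]
  · simp [stdBasis, h.not_ge, h.ne']

theorem iterate_ladderMap_stdBasis_ne {n j q : ℕ} (hj : j < n) (hq₀ : 0 < q) (hqj : q ≤ j) :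
    ladderMap^[q] (stdBasis n j) ≠ stdBasis n j := by
  intro h
  have h_entry := congrFun h ⟨j - q, by omega⟩
  rw [iterate_ladderMap_stdBasis_apply hj] at h_entry
  simp [stdBasis, Nat.sub_sub_self hqj] at h_entry
  omega

theorem iterate_ladderMap_stdBasis_apply_zero {n j : ℕ} (hj : j < n) (k : ℕ) :
    ladderMap^[k] (stdBasis n j) ⟨0, by omega⟩ = ((k.choose j : ℕ) : ZMod 2) := by
  simp [iterate_ladderMap_stdBasis_apply hj]

theorem card_filter_iterate_ladderMap_stdBasis_apply_zero {n j : ℕ} (hj : j < n) :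
    ((Finset.range (j + 1)).filter
      (fun k => ladderMap^[k] (stdBasis n j) ⟨0, by omega⟩ = 1)).card = 1 := by
  rw [Finset.card_eq_one]
  refine ⟨j, Finset.ext fun k => ?_⟩
  simp only [Finset.mem_filter, Finset.mem_range, Finset.mem_singleton,
    iterate_ladderMap_stdBasis_apply_zero hj]
  constructor
  · rintro ⟨hk, hk₁⟩
    by_contra hne
    simp [Nat.choose_eq_zero_of_lt (by omega : k < j)] at hk₁
  · rintro rfl
    simp

/-- The orbit of the standard basis vector `e_{2^{⌊log₂ n⌋}−1}` under `T` has period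
exactly `2^{⌊log₂ n⌋}`, and exactly one element of this orbit has a `1` in its first
entry. -/
theorem ladderMap_basis_orbit (n : ℕ) (hn : 2 ≤ n) :
    let v : Fin n → ZMod 2 := fun i => if (i : ℕ) = 2 ^ Nat.log 2 n - 1 then 1 else 0
    ((ladderMap (n := n))^[2 ^ Nat.log 2 n] v = v ∧
        ∀ q, 0 < q → q < 2 ^ Nat.log 2 n → (ladderMap (n := n))^[q] v ≠ v) ∧
      ((Finset.range (2 ^ Nat.log 2 n)).filter
          (fun k => ((ladderMap (n := n))^[k] v) ⟨0, by omega⟩ = 1)).card = 1 := by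
  intro v
  have hv : v = stdBasis n (2 ^ Nat.log 2 n - 1) := rfl
  clear_value v
  subst hv
  obtain ⟨j, hj_succ⟩ : ∃ j, 2 ^ Nat.log 2 n = j + 1 :=
    Nat.exists_eq_add_one.mpr (Nat.two_pow_pos _)
  have hj : j < n := by
    have := Nat.pow_log_le_self 2 (by omega : n ≠ 0)
    omega
  rw [show 2 ^ Nat.log 2 n - 1 = j by omega]
  refine ⟨⟨iterate_ladderMap_two_pow_stdBasis hj (by omega),
    fun q hq₀ hq => iterate_ladderMap_stdBasis_ne hj hq₀ (by omega)⟩, ?_⟩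
  rw [hj_succ]
  exact card_filter_iterate_ladderMap_stdBasis_apply_zero hj
end

section
/- Let A be an n_A-qubit subsystem and consider the channel Ũ = D ∘ U_L ∘ D ∘ … ∘ D ∘ U_1 consisting of L unitary layers on A interleaved with instances of local depolarizing noise D = D_p^{⊗n_A} on all qubits of A. For any traceless operator M on A⊗B that is a linear combination of Pauli strings each acting nontrivially on A, ‖(Ũ ⊗ I_B)(M)‖₂ ≤ (1−p)^L ‖M‖₂. -/
open Matrix

noncomputable def frobNorm {m : Type*} [Fintype m] (A : Matrix m m ℂ) : ℝ :=
  Real.sqrt ((Matrix.trace (Aᴴ * A)).re)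

def PX : Matrix (Fin 2) (Fin 2) ℂ := !![0, 1; 1, 0]
noncomputable def PY : Matrix (Fin 2) (Fin 2) ℂ := !![0, -Complex.I; Complex.I, 0]
def PZ : Matrix (Fin 2) (Fin 2) ℂ := !![1, 0; 0, -1]

noncomputable def pauliFactor : Fin 4 → Matrix (Fin 2) (Fin 2) ℂ
  | 0 => 1
  | 1 => PX
  | 2 => PY
  | 3 => PZ

abbrev QMat (ι : Type*) := Matrix (ι → Fin 2) (ι → Fin 2) ℂ

/-- The Pauli tensor-product string with factor `σ_{f k}` on qubit `k`. -/
noncomputable def pauliStr {ι : Type*} [Fintype ι] (f : ι → Fin 4) : QMat ι :=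
  fun i j => ∏ k, pauliFactor (f k) (i k) (j k)

/-- Replace qubit `a` by the maximally mixed state `I/2`. -/
noncomputable def replaceQ {ι : Type*} [Fintype ι] [DecidableEq ι] (a : ι) (A : QMat ι) : QMat ι :=
  fun i j => if i a = j a then
      (1 / 2 : ℂ) * ∑ b : Fin 2, A (Function.update i a b) (Function.update j a b)
    else 0

/-- Single-qubit depolarizing channel with probability `p` on qubit `a`. -/
noncomputable def depolQ {ι : Type*} [Fintype ι] [DecidableEq ι] (p : ℝ) (a : ι) (A : QMat ι) :
    QMat ι :=
  ((1 : ℂ) - (p : ℂ)) • A + (p : ℂ) • replaceQ a A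

/-- Local depolarizing noise `D_p^{⊗n_A}` on every qubit of subsystem `A`. -/
noncomputable def depolA {nA nB : ℕ} (p : ℝ) (M : QMat (Fin nA ⊕ Fin nB)) :
    QMat (Fin nA ⊕ Fin nB) :=
  (List.finRange nA).foldl (fun B (a : Fin nA) => depolQ p (Sum.inl a) B) M

/-- Extension `U ⊗ I_B` of a unitary on subsystem `A` to the joint system. -/
noncomputable def extA {nA nB : ℕ} (U : QMat (Fin nA)) : QMat (Fin nA ⊕ Fin nB) :=
  fun i j => U (i ∘ Sum.inl) (j ∘ Sum.inl) * (if (i ∘ Sum.inr) = (j ∘ Sum.inr) then 1 else 0)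

/-- The noisy evolution `Ũ ⊗ I_B = (D∘U_L∘D∘…∘D∘U_1) ⊗ I_B`: `L` unitary layers on `A`
interleaved with local depolarizing noise on all qubits of `A`. -/
noncomputable def tildeU {nA nB L : ℕ} (p : ℝ) (U : Fin L → QMat (Fin nA))
    (M : QMat (Fin nA ⊕ Fin nB)) : QMat (Fin nA ⊕ Fin nB) :=
  (List.finRange L).foldl
    (fun B (k : Fin L) => depolA p (extA (U k) * B * (extA (U k) : QMat (Fin nA ⊕ Fin nB))ᴴ)) M

/-!
Pauli strings are orthogonal for the trace pairing with `‖P_f‖₂² = 2^n`, so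
`‖∑ c_f P_f‖₂² = 2^n ∑ |c_f|²`. Depolarizing noise on qubit `a` multiplies `P_f` by `1` or by
`1 - p` according as `f` is trivial at `a` or not, so `D_p^{⊗n_A}` shrinks every coefficient of a
string acting nontrivially on `A` by a factor at most `1 - p`. A unitary `V` on `A` commutes with
every Pauli string that is trivial on `A`, so conjugation by `V ⊗ I_B` keeps the coefficients of
those strings zero, and it preserves `‖·‖₂`. Each noisy layer therefore contracts by `1 - p`.
-/

open Finset

section Pauli

variable {ι : Type*} [Fintype ι]

lemma pauliFactor_zero : pauliFactor 0 = 1 := rfl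

lemma pauliFactor_conjTranspose (m : Fin 4) : (pauliFactor m)ᴴ = pauliFactor m := by
  fin_cases m <;> ext a b <;> fin_cases a <;> fin_cases b <;>
    simp [pauliFactor, PX, PY, PZ]

lemma trace_pauliFactor_mul (m m' : Fin 4) :
    trace (pauliFactor m * pauliFactor m') = if m = m' then 2 else 0 := by
  fin_cases m <;> fin_cases m' <;>
    simp [pauliFactor, PX, PY, PZ, trace, Fin.sum_univ_two, Complex.ext_iff] <;> norm_num

lemma trace_pauliFactor (m : Fin 4) : trace (pauliFactor m) = if m = 0 then 2 else 0 := by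
  fin_cases m <;> simp [pauliFactor, PX, PY, PZ, trace, Fin.sum_univ_two]

lemma pauliStr_conjTranspose (f : ι → Fin 4) : (pauliStr f)ᴴ = pauliStr f := by
  ext i j
  simp only [conjTranspose_apply, pauliStr, star_prod]
  exact prod_congr rfl fun k _ => by
    simpa using congr_fun₂ (pauliFactor_conjTranspose (f k)) (i k) (j k)

lemma pauliStr_zero : pauliStr (0 : ι → Fin 4) = 1 := by
  ext i j
  simp only [pauliStr, Pi.zero_apply, pauliFactor_zero, one_apply, prod_boole, mem_univ,
    true_implies, funext_iff]

variable [DecidableEq ι]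

lemma trace_pauliStr_mul (f g : ι → Fin 4) :
    trace (pauliStr f * pauliStr g) = ∏ k, trace (pauliFactor (f k) * pauliFactor (g k)) := by
  simp only [trace, Matrix.diag, mul_apply, pauliStr, ← prod_mul_distrib]
  rw [Fintype.prod_sum]
  exact sum_congr rfl fun i _ => (Fintype.prod_sum fun k b =>
    pauliFactor (f k) (i k) b * pauliFactor (g k) b (i k)).symm

lemma trace_pauliStr_mul_pauliStr (f g : ι → Fin 4) :
    trace (pauliStr f * pauliStr g) = if f = g then 2 ^ Fintype.card ι else 0 := by
  simp only [trace_pauliStr_mul, trace_pauliFactor_mul, prod_ite_zero, mem_univ, true_implies,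
    funext_iff, prod_const, card_univ]

lemma trace_pauliStr_mul_sum (c : (ι → Fin 4) → ℂ) (g : ι → Fin 4) :
    trace (pauliStr g * ∑ f, c f • pauliStr f) = 2 ^ Fintype.card ι * c g := by
  simp [mul_sum, trace_sum, trace_pauliStr_mul_pauliStr, mul_comm]

lemma linearIndependent_pauliStr : LinearIndependent ℂ (pauliStr (ι := ι)) := by
  refine Fintype.linearIndependent_iff.2 fun c hc g => ?_
  simpa [trace_pauliStr_mul_sum] using congr_arg (fun N => trace (pauliStr g * N)) hc

lemma exists_eq_sum_pauliStr (N : QMat ι) : ∃ c : (ι → Fin 4) → ℂ, N = ∑ f, c f • pauliStr f := by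
  have hcard : Fintype.card (ι → Fin 4) = Module.finrank ℂ (QMat ι) := by
    simp [Module.finrank_matrix, ← mul_pow]
  have hspan := linearIndependent_pauliStr.span_eq_top_of_card_eq_finrank hcard
  obtain ⟨c, hc⟩ := (Submodule.mem_span_range_iff_exists_fun ℂ).1 (hspan ▸ Submodule.mem_top)
  exact ⟨c, hc.symm⟩

lemma frobNorm_sum_smul_pauliStr (c : (ι → Fin 4) → ℂ) :
    frobNorm (∑ f, c f • pauliStr f) = √(2 ^ Fintype.card ι * ∑ f, Complex.normSq (c f)) := by
  have hstar : (∑ f, c f • pauliStr f)ᴴ = ∑ f, star (c f) • pauliStr f := by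
    simp [conjTranspose_sum, pauliStr_conjTranspose]
  have hterm : ∀ f, star (c f) * (2 ^ Fintype.card ι * c f)
      = ((2 ^ Fintype.card ι * Complex.normSq (c f) : ℝ) : ℂ) := by
    intro f
    push_cast
    rw [Complex.normSq_eq_conj_mul_self, Complex.star_def]
    ring
  rw [frobNorm, hstar, sum_mul, trace_sum]
  simp_rw [smul_mul, trace_smul, trace_pauliStr_mul_sum, smul_eq_mul, hterm]
  rw [← Complex.ofReal_sum, Complex.ofReal_re, mul_sum]

lemma frobNorm_sum_smul_pauliStr_le {r : ℝ} (hr : 0 ≤ r) (d : (ι → Fin 4) → ℝ)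
    (c : (ι → Fin 4) → ℂ) (hd : ∀ f, c f ≠ 0 → |d f| ≤ r) :
    frobNorm (∑ f, ((d f : ℂ) * c f) • pauliStr f) ≤ r * frobNorm (∑ f, c f • pauliStr f) := by
  have hterm : ∀ f, Complex.normSq ((d f : ℂ) * c f) ≤ r ^ 2 * Complex.normSq (c f) := by
    intro f
    rw [Complex.normSq_mul, Complex.normSq_ofReal]
    by_cases hf : c f = 0
    · simp [hf]
    · have hdf := hd f hf
      rw [← abs_mul_abs_self]
      exact mul_le_mul_of_nonneg_right (by nlinarith [abs_nonneg (d f)]) (Complex.normSq_nonneg _)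
  rw [frobNorm_sum_smul_pauliStr, frobNorm_sum_smul_pauliStr]
  calc √(2 ^ Fintype.card ι * ∑ f, Complex.normSq ((d f : ℂ) * c f))
      ≤ √(2 ^ Fintype.card ι * (r ^ 2 * ∑ f, Complex.normSq (c f))) := by
        gcongr
        rw [mul_sum]
        exact sum_le_sum fun f _ => hterm f
    _ = r * √(2 ^ Fintype.card ι * ∑ f, Complex.normSq (c f)) := by
        rw [mul_left_comm, Real.sqrt_mul (sq_nonneg r), Real.sqrt_sq hr]

end Pauli

lemma frobNorm_unitary_mul_mul_conjTranspose {m : Type*} [Fintype m] [DecidableEq m]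
    {W : Matrix m m ℂ} (hW : W ∈ unitaryGroup m ℂ) (N : Matrix m m ℂ) :
    frobNorm (W * N * Wᴴ) = frobNorm N := by
  have hWW : Wᴴ * W = 1 := mem_unitaryGroup_iff'.1 hW
  have hconj : (W * N * Wᴴ)ᴴ * (W * N * Wᴴ) = W * (Nᴴ * N) * Wᴴ := by
    simp only [conjTranspose_mul, conjTranspose_conjTranspose, Matrix.mul_assoc]
    rw [← Matrix.mul_assoc Wᴴ W, hWW, Matrix.one_mul]
  rw [frobNorm, frobNorm, hconj, trace_mul_cycle, ← Matrix.mul_assoc, hWW, Matrix.one_mul]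

section DepolFactor

def depolFactor (p : ℝ) (m : Fin 4) : ℝ := if m = 0 then 1 else 1 - p

variable {p : ℝ}

lemma depolFactor_nonneg (hp1 : p ≤ 1) (m : Fin 4) : 0 ≤ depolFactor p m := by
  unfold depolFactor; split_ifs <;> linarith

lemma depolFactor_le_one (hp0 : 0 ≤ p) (m : Fin 4) : depolFactor p m ≤ 1 := by
  unfold depolFactor; split_ifs <;> linarith

lemma prod_depolFactor_le {κ : Type*} [Fintype κ] (hp0 : 0 ≤ p) (hp1 : p ≤ 1) {g : κ → Fin 4}
    (hg : ∃ a, g a ≠ 0) : ∏ a, depolFactor p (g a) ≤ 1 - p := by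
  obtain ⟨a, ha⟩ := hg
  classical
  rw [← mul_prod_erase univ _ (mem_univ a), depolFactor, if_neg ha]
  exact mul_le_of_le_one_right (by linarith)
    (prod_le_one (fun k _ => depolFactor_nonneg hp1 _) fun k _ => depolFactor_le_one hp0 _)

end DepolFactor

section Depolarizing

variable {ι : Type*} [Fintype ι] [DecidableEq ι]

lemma pauliStr_apply_eq_mul_prod_erase (f : ι → Fin 4) (a : ι) (i j : ι → Fin 2) :
    pauliStr f i j = pauliFactor (f a) (i a) (j a)
      * ∏ k ∈ univ.erase a, pauliFactor (f k) (i k) (j k) :=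
  (mul_prod_erase univ _ (mem_univ a)).symm

lemma replaceQ_pauliStr (a : ι) (f : ι → Fin 4) :
    replaceQ a (pauliStr f) = if f a = 0 then pauliStr f else 0 := by
  ext i j
  set R := ∏ k ∈ univ.erase a, pauliFactor (f k) (i k) (j k)
  have hupdate : ∀ b, pauliStr f (Function.update i a b) (Function.update j a b)
      = pauliFactor (f a) b b * R := fun b => by
    rw [pauliStr_apply_eq_mul_prod_erase f a, Function.update_self, Function.update_self]
    congr 1
    exact prod_congr rfl fun k hk => by
      rw [Function.update_of_ne (ne_of_mem_erase hk), Function.update_of_ne (ne_of_mem_erase hk)]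
  have htrace : ∑ b, pauliFactor (f a) b b = if f a = 0 then 2 else 0 := trace_pauliFactor (f a)
  simp only [replaceQ, hupdate, ← sum_mul, htrace]
  split_ifs with hij hfa hfa <;>
    simp [pauliStr_apply_eq_mul_prod_erase f a, hfa, hij, pauliFactor_zero, R]

noncomputable def depolQLinearMap (p : ℝ) (a : ι) : QMat ι →ₗ[ℂ] QMat ι where
  toFun := depolQ p a
  map_add' A B := by
    ext i j
    simp only [depolQ, replaceQ, Matrix.add_apply, Matrix.smul_apply, smul_eq_mul,
      sum_add_distrib]
    split_ifs <;> ring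
  map_smul' z A := by
    ext i j
    simp only [depolQ, replaceQ, Matrix.add_apply, Matrix.smul_apply, smul_eq_mul,
      RingHom.id_apply, ← mul_sum]
    split_ifs <;> ring_nf

lemma depolQ_pauliStr (p : ℝ) (a : ι) (f : ι → Fin 4) :
    depolQ p a (pauliStr f) = (depolFactor p (f a) : ℂ) • pauliStr f := by
  rw [depolQ, replaceQ_pauliStr, depolFactor]
  split_ifs
  · rw [← add_smul, sub_add_cancel, Complex.ofReal_one]
  · rw [smul_zero, add_zero, Complex.ofReal_sub, Complex.ofReal_one]

lemma depolQ_sum_smul_pauliStr (p : ℝ) (a : ι) (c : (ι → Fin 4) → ℂ) :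
    depolQ p a (∑ f, c f • pauliStr f) = ∑ f, ((depolFactor p (f a) : ℂ) * c f) • pauliStr f := by
  change depolQLinearMap p a _ = _
  simp only [map_sum, map_smul]
  exact sum_congr rfl fun f _ => by
    rw [show depolQLinearMap p a (pauliStr f) = _ from depolQ_pauliStr p a f, smul_smul, mul_comm]

lemma foldl_depolQ_sum_smul_pauliStr {κ : Type*} (p : ℝ) (q : κ → ι) (l : List κ)
    (c : (ι → Fin 4) → ℂ) :
    l.foldl (fun B k => depolQ p (q k) B) (∑ f, c f • pauliStr f)
      = ∑ f, (((l.map fun k => depolFactor p (f (q k))).prod : ℝ) * c f) • pauliStr f := by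
  induction l generalizing c with
  | nil => simp
  | cons k l ih =>
    rw [List.foldl_cons, depolQ_sum_smul_pauliStr, ih]
    refine sum_congr rfl fun f _ => ?_
    rw [List.map_cons, List.prod_cons, Complex.ofReal_mul]
    ring_nf

end Depolarizing

lemma depolA_sum_smul_pauliStr {nA nB : ℕ} (p : ℝ) (c : (Fin nA ⊕ Fin nB → Fin 4) → ℂ) :
    depolA p (∑ f, c f • pauliStr f)
      = ∑ f, ((∏ a, depolFactor p (f (Sum.inl a)) : ℝ) * c f) • pauliStr f := by
  simp only [depolA, foldl_depolQ_sum_smul_pauliStr, Fin.prod_univ_def]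

section Bipartite

open scoped Kronecker

variable {nA nB : ℕ}

lemma pauliStr_eq_submatrix_kronecker {ι κ : Type*} [Fintype ι] [Fintype κ]
    (f : ι ⊕ κ → Fin 4) :
    pauliStr f = (pauliStr (f ∘ Sum.inl) ⊗ₖ pauliStr (f ∘ Sum.inr)).submatrix
      (Equiv.sumArrowEquivProdArrow ι κ (Fin 2)) (Equiv.sumArrowEquivProdArrow ι κ (Fin 2)) := by
  ext i j
  simp [pauliStr, Fintype.prod_sum_type]

lemma extA_eq_submatrix_kronecker (U : QMat (Fin nA)) :
    (extA U : QMat (Fin nA ⊕ Fin nB)) = (U ⊗ₖ (1 : QMat (Fin nB))).submatrix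
      (Equiv.sumArrowEquivProdArrow _ _ (Fin 2)) (Equiv.sumArrowEquivProdArrow _ _ (Fin 2)) := by
  rfl

lemma extA_mem_unitaryGroup {U : QMat (Fin nA)} (hU : U ∈ unitaryGroup (Fin nA → Fin 2) ℂ) :
    (extA U : QMat (Fin nA ⊕ Fin nB)) ∈ unitaryGroup (Fin nA ⊕ Fin nB → Fin 2) ℂ := by
  rw [mem_unitaryGroup_iff', extA_eq_submatrix_kronecker, star_eq_conjTranspose,
    conjTranspose_submatrix, conjTranspose_kronecker, submatrix_mul_equiv,
    ← mul_kronecker_mul, ← star_eq_conjTranspose, mem_unitaryGroup_iff'.1 hU, conjTranspose_one,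
    Matrix.one_mul, one_kronecker_one, submatrix_one_equiv]

lemma extA_commute_pauliStr (U : QMat (Fin nA)) {g : Fin nA ⊕ Fin nB → Fin 4}
    (hg : g ∘ Sum.inl = 0) : Commute (extA U) (pauliStr g) := by
  rw [Commute, SemiconjBy, extA_eq_submatrix_kronecker, pauliStr_eq_submatrix_kronecker, hg,
    pauliStr_zero, submatrix_mul_equiv, submatrix_mul_equiv, ← mul_kronecker_mul,
    ← mul_kronecker_mul, Matrix.mul_one, Matrix.one_mul, Matrix.mul_one, Matrix.one_mul]

end Bipartite

/-- No Pauli component of `N` acts as the identity on the left factor; equivalently, the partial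
trace of `N` over that factor vanishes. -/
def NontrivialOnLeft {ι κ : Type*} [Fintype ι] [Fintype κ] [DecidableEq ι] [DecidableEq κ]
    (N : QMat (ι ⊕ κ)) : Prop :=
  ∀ g : ι ⊕ κ → Fin 4, g ∘ Sum.inl = 0 → trace (pauliStr g * N) = 0

lemma nontrivialOnLeft_sum_smul_pauliStr_iff {ι κ : Type*} [Fintype ι] [Fintype κ] [DecidableEq ι]
    [DecidableEq κ] {c : (ι ⊕ κ → Fin 4) → ℂ} :
    NontrivialOnLeft (∑ f, c f • pauliStr f) ↔ ∀ f, c f ≠ 0 → ∃ a, f (Sum.inl a) ≠ 0 := by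
  simp only [NontrivialOnLeft, trace_pauliStr_mul_sum, mul_eq_zero, pow_eq_zero_iff',
    two_ne_zero, false_and, false_or]
  refine ⟨fun h f hf => ?_, fun h g hg => ?_⟩
  · by_contra! hf'
    exact hf (h f (funext hf'))
  · by_contra hcg
    obtain ⟨a, ha⟩ := h g hcg
    exact ha (congr_fun hg a)

section NoisyLayer

variable {nA nB : ℕ}

noncomputable def noisyLayer (p : ℝ) (V : QMat (Fin nA)) (N : QMat (Fin nA ⊕ Fin nB)) :
    QMat (Fin nA ⊕ Fin nB) :=
  depolA p (extA V * N * (extA V : QMat (Fin nA ⊕ Fin nB))ᴴ)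

lemma NontrivialOnLeft.extA_mul_mul_conjTranspose {N : QMat (Fin nA ⊕ Fin nB)}
    (hN : NontrivialOnLeft N) {V : QMat (Fin nA)} (hV : V ∈ unitaryGroup (Fin nA → Fin 2) ℂ) :
    NontrivialOnLeft (extA V * N * (extA V : QMat (Fin nA ⊕ Fin nB))ᴴ) := by
  intro g hg
  have hW : (extA V : QMat (Fin nA ⊕ Fin nB))ᴴ * extA V = 1 :=
    mem_unitaryGroup_iff'.1 (extA_mem_unitaryGroup hV)
  rw [← Matrix.mul_assoc, ← Matrix.mul_assoc, ← (extA_commute_pauliStr V hg).eq, Matrix.mul_assoc,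
    trace_mul_comm, ← Matrix.mul_assoc, Matrix.mul_assoc N, hW, Matrix.mul_one, trace_mul_comm]
  exact hN g hg

lemma NontrivialOnLeft.depolA {N : QMat (Fin nA ⊕ Fin nB)} (hN : NontrivialOnLeft N) (p : ℝ) :
    NontrivialOnLeft (depolA p N) := by
  obtain ⟨c, rfl⟩ := exists_eq_sum_pauliStr N
  rw [depolA_sum_smul_pauliStr, nontrivialOnLeft_sum_smul_pauliStr_iff]
  exact fun f hf => nontrivialOnLeft_sum_smul_pauliStr_iff.1 hN f (right_ne_zero_of_mul hf)

lemma frobNorm_depolA_le {p : ℝ} (hp0 : 0 ≤ p) (hp1 : p ≤ 1) {N : QMat (Fin nA ⊕ Fin nB)}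
    (hN : NontrivialOnLeft N) : frobNorm (depolA p N) ≤ (1 - p) * frobNorm N := by
  obtain ⟨c, rfl⟩ := exists_eq_sum_pauliStr N
  rw [depolA_sum_smul_pauliStr]
  refine frobNorm_sum_smul_pauliStr_le (by linarith) _ c fun f hf => ?_
  rw [abs_of_nonneg (prod_nonneg fun a _ => depolFactor_nonneg hp1 _)]
  exact prod_depolFactor_le hp0 hp1 (nontrivialOnLeft_sum_smul_pauliStr_iff.1 hN f hf)

lemma NontrivialOnLeft.noisyLayer {N : QMat (Fin nA ⊕ Fin nB)} (hN : NontrivialOnLeft N)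
    (p : ℝ) {V : QMat (Fin nA)} (hV : V ∈ unitaryGroup (Fin nA → Fin 2) ℂ) :
    NontrivialOnLeft (noisyLayer p V N) :=
  (hN.extA_mul_mul_conjTranspose hV).depolA p

lemma frobNorm_noisyLayer_le {p : ℝ} (hp0 : 0 ≤ p) (hp1 : p ≤ 1) {N : QMat (Fin nA ⊕ Fin nB)}
    (hN : NontrivialOnLeft N) {V : QMat (Fin nA)} (hV : V ∈ unitaryGroup (Fin nA → Fin 2) ℂ) :
    frobNorm (noisyLayer p V N) ≤ (1 - p) * frobNorm N := by
  rw [noisyLayer, ← frobNorm_unitary_mul_mul_conjTranspose (extA_mem_unitaryGroup hV) N]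
  exact frobNorm_depolA_le hp0 hp1 (hN.extA_mul_mul_conjTranspose hV)

lemma frobNorm_foldl_noisyLayer_le {κ : Type*} {p : ℝ} (hp0 : 0 ≤ p) (hp1 : p ≤ 1)
    {U : κ → QMat (Fin nA)} (hU : ∀ k, U k ∈ unitaryGroup (Fin nA → Fin 2) ℂ) (l : List κ)
    {N : QMat (Fin nA ⊕ Fin nB)} (hN : NontrivialOnLeft N) :
    frobNorm (l.foldl (fun B k => noisyLayer p (U k) B) N) ≤ (1 - p) ^ l.length * frobNorm N := by
  induction l generalizing N with
  | nil => simp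
  | cons k l ih =>
    calc frobNorm (l.foldl (fun B k => noisyLayer p (U k) B) (noisyLayer p (U k) N))
        ≤ (1 - p) ^ l.length * frobNorm (noisyLayer p (U k) N) := ih (hN.noisyLayer p (hU k))
      _ ≤ (1 - p) ^ l.length * ((1 - p) * frobNorm N) :=
        mul_le_mul_of_nonneg_left (frobNorm_noisyLayer_le hp0 hp1 hN (hU k))
          (pow_nonneg (by linarith) _)
      _ = (1 - p) ^ (k :: l).length * frobNorm N := by
        rw [List.length_cons, pow_succ, mul_assoc]

end NoisyLayer

theorem noisy_layers_contraction_general (nA nB L : ℕ) (p : ℝ) (hp0 : 0 ≤ p) (hp1 : p ≤ 1)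
    (U : Fin L → QMat (Fin nA))
    (hU : ∀ k, U k ∈ Matrix.unitaryGroup (Fin nA → Fin 2) ℂ)
    (c : (Fin nA ⊕ Fin nB → Fin 4) → ℂ)
    (hc : ∀ f, c f ≠ 0 → ∃ a : Fin nA, f (Sum.inl a) ≠ 0)
    (M : QMat (Fin nA ⊕ Fin nB)) (hM : M = ∑ f, c f • pauliStr f) :
    frobNorm (tildeU (nB := nB) p U M) ≤ (1 - p) ^ L * frobNorm M := by
  have hMA : NontrivialOnLeft M := hM ▸ nontrivialOnLeft_sum_smul_pauliStr_iff.2 hc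
  have h := frobNorm_foldl_noisyLayer_le hp0 hp1 hU (List.finRange L) hMA
  rw [List.length_finRange] at h
  exact h

/-- For `L` noisy unitary layers on subsystem `A` (local depolarizing noise with
probability `p` interleaved between unitary layers), any traceless operator `M` that is
a linear combination of Pauli strings acting nontrivially on `A` contracts as
`‖(Ũ ⊗ I_B)(M)‖₂ ≤ (1−p)^L ‖M‖₂`. -/
theorem noisy_layers_contraction (nA nB L : ℕ) (p : ℝ) (hp0 : 0 ≤ p) (hp1 : p ≤ 1)
    (U : Fin L → QMat (Fin nA))
    (hU : ∀ k, U k ∈ Matrix.unitaryGroup (Fin nA → Fin 2) ℂ)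
    (c : (Fin nA ⊕ Fin nB → Fin 4) → ℂ)
    (hc : ∀ f, c f ≠ 0 → ∃ a : Fin nA, f (Sum.inl a) ≠ 0)
    (M : QMat (Fin nA ⊕ Fin nB)) (hM : M = ∑ f, c f • pauliStr f)
    (hMtr : Matrix.trace M = 0) :
    frobNorm (tildeU (nB := nB) p U M) ≤ (1 - p) ^ L * frobNorm M :=
  noisy_layers_contraction_general nA nB L p hp0 hp1 U hU c hc M hM
end
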